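/- Assume |J| = 1, the travel times τ are continuous and have a differentiable convex potential Φ (τ(x) = ∇Φ(x) on ℱ), all externality factors g_{i,p} are constant, and B ∈ ℝ_{≥0} is a feasible budget. Then the set L(B) = {λ ≥ 0 : there exists x ∈ WE(λ) with G(x) ≤ B} is nonempty, upward closed (if λ ∈ L(B) and λ' ≥ λ then λ' ∈ L(B)), and closed; in particular the minimal price λ* = min L(B) such that some Wardrop equilibrium with respect to c^{λ*} respects B exists. -/

import Mathlib

open Finset

variable {I : Type*} [Fintype I] [DecidableEq I]
  {P : I → Type*} [∀ i, Fintype (P i)] [∀ i, DecidableEq (P i)]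

/-- A flow is feasible if it is nonnegative and satisfies all demands. -/
def Feasible (d : I → ℝ) (x : ∀ i, P i → ℝ) : Prop :=
  (∀ i p, 0 ≤ x i p) ∧ ∀ i, ∑ p, x i p = d i

/-- Wardrop equilibrium with respect to a cost function. -/
def IsWardrop (d : I → ℝ) (c : (∀ i, P i → ℝ) → ∀ i, P i → ℝ)
    (x : ∀ i, P i → ℝ) : Prop :=
  Feasible d x ∧ ∀ i p, 0 < x i p → ∀ q, c x i p ≤ c x i q

/-- Total externality for a single externality class with constant factors `g`. -/
def Gtot (g : ∀ i, P i → ℝ) (x : ∀ i, P i → ℝ) : ℝ :=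
  ∑ i, ∑ p, g i p * x i p

/-!
Since `Φ` is a convex potential of `τ`, the Wardrop equilibria for the price `λ` are exactly the
minimisers of `Φ + λ G` over the compact convex set of feasible flows. Comparing minimisers for
`λ < λ'` (add the two minimality inequalities) shows that raising the price never raises `G`,
whence upward closedness; the minimality inequalities pass to limits, and projecting along the
compact set of flows gives closedness. For nonemptiness, minimise `Φ` over the flows minimising
`G`. Such a flow only uses paths of least externality in each commodity; shifting mass between
such paths keeps the flow a minimiser of `G`, so minimality of `Φ` makes every used path at most
as slow as every other least-externality path, and a large enough price makes the paths of
strictly larger externality too expensive.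
-/

set_option linter.unusedSectionVars false

def unitFlow (i : I) (p : P i) : ∀ j, P j → ℝ :=
  Pi.single i (Pi.single p 1)

lemma sum_smul_unitFlow (x : ∀ i, P i → ℝ) : ∑ i, ∑ p, x i p • unitFlow i p = x := by
  ext j r
  simp only [Finset.sum_apply, Pi.smul_apply, smul_eq_mul, unitFlow]
  rw [Fintype.sum_eq_single j fun i hi => by simp [Pi.single_eq_of_ne hi.symm]]
  simp [Pi.single_apply]

lemma ContinuousLinearMap.apply_eq_sum_mul_unitFlow (L : (∀ i, P i → ℝ) →L[ℝ] ℝ)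
    (x : ∀ i, P i → ℝ) : L x = ∑ i, ∑ p, x i p * L (unitFlow i p) := by
  conv_lhs => rw [← sum_smul_unitFlow x]
  simp only [map_sum, map_smul, smul_eq_mul]

lemma isCompact_feasible (d : I → ℝ) : IsCompact {x : ∀ i, P i → ℝ | Feasible d x} := by
  have hclosed : IsClosed {x : ∀ i, P i → ℝ | Feasible d x} := by
    simp only [Feasible, Set.ofPred_and, Set.ofPred_forall]
    exact (isClosed_iInter fun i => isClosed_iInter fun p =>
      isClosed_le continuous_const (by fun_prop)).inter
      (isClosed_iInter fun i => isClosed_eq (by fun_prop) continuous_const)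
  refine (isCompact_univ_pi fun i => isCompact_univ_pi fun _ =>
    isCompact_Icc (a := 0) (b := d i)).of_isClosed_subset hclosed fun x hx => ?_
  simp only [Set.mem_pi, Set.mem_univ, forall_true_left, Set.mem_Icc]
  exact fun i p => ⟨hx.1 i p, hx.2 i ▸ Finset.single_le_sum (fun q _ => hx.1 i q) (mem_univ p)⟩

lemma convex_feasible (d : I → ℝ) : Convex ℝ {x : ∀ i, P i → ℝ | Feasible d x} := by
  intro x hx y hy a b ha hb hab
  refine ⟨fun i p => ?_, fun i => ?_⟩
  · have := hx.1 i p
    have := hy.1 i p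
    simp only [Pi.add_apply, Pi.smul_apply, smul_eq_mul]
    positivity
  · simp [Finset.sum_add_distrib, ← Finset.mul_sum, hx.2 i, hy.2 i, ← add_mul, hab]

lemma Feasible.add_smul_unitFlow_sub {d : I → ℝ} {x : ∀ i, P i → ℝ} (hx : Feasible d x)
    (i : I) (p q : P i) : Feasible d (x + x i p • (unitFlow i q - unitFlow i p)) := by
  refine ⟨fun j r => ?_, fun j => ?_⟩
  · rcases eq_or_ne j i with rfl | hj
    · have := hx.1 j r
      have := hx.1 j p
      simp only [unitFlow, Pi.add_apply, Pi.smul_apply, Pi.sub_apply, Pi.single_eq_same,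
        smul_eq_mul, Pi.single_apply]
      split_ifs <;> subst_vars <;> linarith
    · simpa [unitFlow, hj] using hx.1 j r
  · rcases eq_or_ne j i with rfl | hj
    · simp [unitFlow, Finset.sum_add_distrib, ← Finset.mul_sum, Finset.sum_sub_distrib, hx.2 j]
    · simpa [unitFlow, hj] using hx.2 j

def gtotCLM (g : ∀ i, P i → ℝ) : (∀ i, P i → ℝ) →L[ℝ] ℝ :=
  ∑ i, ∑ p, g i p •
    (ContinuousLinearMap.proj (R := ℝ) (φ := fun _ : P i => ℝ) p).comp (ContinuousLinearMap.proj i)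

@[simp]
lemma coe_gtotCLM (g : ∀ i, P i → ℝ) : ⇑(gtotCLM g) = Gtot g := by
  ext x
  simp [gtotCLM, Gtot]

lemma continuous_Gtot (g : ∀ i, P i → ℝ) : Continuous (Gtot g) :=
  coe_gtotCLM g ▸ (gtotCLM g).continuous

lemma differentiable_Gtot (g : ∀ i, P i → ℝ) : Differentiable ℝ (Gtot g) :=
  coe_gtotCLM g ▸ (gtotCLM g).differentiable

lemma convexOn_const_mul_Gtot {s : Set (∀ i, P i → ℝ)} (hs : Convex ℝ s) (g : ∀ i, P i → ℝ)
    (lam : ℝ) : ConvexOn ℝ s fun x => lam * Gtot g x := by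
  have : ConvexOn ℝ s (lam • Gtot g) := by
    simpa using ((lam • gtotCLM g : (∀ i, P i → ℝ) →L[ℝ] ℝ) : (∀ i, P i → ℝ) →ₗ[ℝ] ℝ).convexOn hs
  exact this

lemma Gtot_unitFlow (g : ∀ i, P i → ℝ) (i : I) (p : P i) : Gtot g (unitFlow i p) = g i p := by
  rw [Gtot, Fintype.sum_eq_single i fun j hj => by simp [unitFlow, Pi.single_eq_of_ne hj]]
  simp [unitFlow, Pi.single_apply]

def IsPotentialOn (d : I → ℝ) (Ψ : (∀ i, P i → ℝ) → ℝ)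
    (c : (∀ i, P i → ℝ) → ∀ i, P i → ℝ) : Prop :=
  ∀ x, Feasible d x → ∀ i p, fderiv ℝ Ψ x (unitFlow i p) = c x i p

lemma isPotentialOn_Gtot (d : I → ℝ) (g : ∀ i, P i → ℝ) :
    IsPotentialOn d (Gtot g) fun _ => g := fun x _ i p => by
  rw [← coe_gtotCLM, ContinuousLinearMap.fderiv, coe_gtotCLM, Gtot_unitFlow]

lemma IsPotentialOn.add_mul_Gtot {d : I → ℝ} {Φ : (∀ i, P i → ℝ) → ℝ}
    {τ : (∀ i, P i → ℝ) → ∀ i, P i → ℝ} (hΦ : IsPotentialOn d Φ τ) (hdiff : Differentiable ℝ Φ)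
    (g : ∀ i, P i → ℝ) (lam : ℝ) :
    IsPotentialOn d (fun x => Φ x + lam * Gtot g x) fun x i p => τ x i p + lam * g i p := by
  intro x hx i p
  have hderiv : HasFDerivAt (fun x => Φ x + lam * Gtot g x) (fderiv ℝ Φ x + lam • gtotCLM g) x :=
    (hdiff x).hasFDerivAt.add (by simpa using (gtotCLM g).hasFDerivAt.const_mul lam)
  simp [hderiv.fderiv, hΦ x hx, Gtot_unitFlow]

section FirstOrder

variable {E : Type*} [NormedAddCommGroup E] [NormedSpace ℝ E] {f : E → ℝ} {K : Set E} {x y : E}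

lemma IsMinOn.fderiv_sub_nonneg (hmin : IsMinOn f K x) (hK : Convex ℝ K) (hx : x ∈ K)
    (hy : y ∈ K) (hf : DifferentiableAt ℝ f x) : 0 ≤ fderiv ℝ f x (y - x) :=
  hmin.localize.hasFDerivWithinAt_nonneg hf.hasFDerivAt.hasFDerivWithinAt
    (sub_mem_posTangentConeAt_of_segment_subset (hK.segment_subset hx hy))

lemma ConvexOn.add_fderiv_sub_le (hconv : ConvexOn ℝ K f) (hx : x ∈ K) (hy : y ∈ K)
    (hf : DifferentiableAt ℝ f x) : f x + fderiv ℝ f x (y - x) ≤ f y := by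
  have hline : ConvexOn ℝ (AffineMap.lineMap (k := ℝ) x y ⁻¹' K) (f ∘ AffineMap.lineMap x y) :=
    hconv.comp_affineMap _
  have hderiv : HasDerivAt (f ∘ AffineMap.lineMap (k := ℝ) x y) (fderiv ℝ f x (y - x)) 0 := by
    have hf' : HasFDerivAt f (fderiv ℝ f x) (AffineMap.lineMap (k := ℝ) x y 0) := by
      simpa using hf.hasFDerivAt
    exact hf'.comp_hasDerivAt 0 AffineMap.hasDerivAt_lineMap
  have := hline.le_slope_of_hasDerivAt (x := 0) (y := 1) (by simpa) (by simpa) one_pos hderiv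
  simp only [slope, Function.comp_apply, AffineMap.lineMap_apply_zero, AffineMap.lineMap_apply_one,
    sub_zero, inv_one, one_smul, vsub_eq_sub] at this
  linarith

end FirstOrder

lemma sum_mul_le_sum_mul_of_support_minimal {ι : Type*} [Fintype ι] {x y c : ι → ℝ}
    (hy : ∀ p, 0 ≤ y p) (hsum : ∑ p, x p = ∑ p, y p) (hx : ∀ p, 0 < x p → ∀ q, c p ≤ c q) :
    ∑ p, x p * c p ≤ ∑ p, y p * c p := by
  cases isEmpty_or_nonempty ι
  · simp
  obtain ⟨q₀, -, hq₀⟩ := Finset.exists_min_image Finset.univ c Finset.univ_nonempty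
  calc ∑ p, x p * c p ≤ ∑ p, x p * c q₀ := Finset.sum_le_sum fun p _ => by
        rcases le_or_gt (x p) 0 with h | h
        · exact mul_le_mul_of_nonpos_left (hq₀ p (mem_univ p)) h
        · exact mul_le_mul_of_nonneg_left (hx p h q₀) h.le
    _ = ∑ p, y p * c q₀ := by rw [← Finset.sum_mul, ← Finset.sum_mul, hsum]
    _ ≤ ∑ p, y p * c p := Finset.sum_le_sum fun p _ =>
        mul_le_mul_of_nonneg_left (hq₀ p (mem_univ p)) (hy p)

section Wardrop

variable {d : I → ℝ} {Ψ : (∀ i, P i → ℝ) → ℝ} {c : (∀ i, P i → ℝ) → ∀ i, P i → ℝ}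
  {x : ∀ i, P i → ℝ}

lemma cost_le_of_isMinOn {K : Set (∀ i, P i → ℝ)} (hpot : IsPotentialOn d Ψ c)
    (hmin : IsMinOn Ψ K x) (hK : Convex ℝ K) (hxK : x ∈ K) (hx : Feasible d x)
    (hΨ : DifferentiableAt ℝ Ψ x) {i : I} {p q : P i} (hp : 0 < x i p)
    (hmove : x + x i p • (unitFlow i q - unitFlow i p) ∈ K) : c x i p ≤ c x i q := by
  have h := hmin.fderiv_sub_nonneg hK hxK hmove hΨ
  rw [add_sub_cancel_left, map_smul, map_sub, hpot x hx, hpot x hx, smul_eq_mul] at h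
  exact sub_nonneg.1 ((mul_nonneg_iff_of_pos_left hp).1 h)

lemma isWardrop_of_isMinOn (hpot : IsPotentialOn d Ψ c) (hx : Feasible d x)
    (hmin : IsMinOn Ψ {x | Feasible d x} x) (hΨ : DifferentiableAt ℝ Ψ x) : IsWardrop d c x :=
  ⟨hx, fun i p hp q => cost_le_of_isMinOn hpot hmin (convex_feasible d) hx hx hΨ hp
    (hx.add_smul_unitFlow_sub i p q)⟩

lemma IsWardrop.isMinOn (hW : IsWardrop d c x) (hpot : IsPotentialOn d Ψ c)
    (hconv : ConvexOn ℝ {x | Feasible d x} Ψ) (hΨ : DifferentiableAt ℝ Ψ x) :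
    IsMinOn Ψ {x | Feasible d x} x := fun y hy => by
  have hVI : 0 ≤ fderiv ℝ Ψ x (y - x) := by
    rw [ContinuousLinearMap.apply_eq_sum_mul_unitFlow]
    refine Finset.sum_nonneg fun i _ => ?_
    simp only [hpot x hW.1, Pi.sub_apply, sub_mul, Finset.sum_sub_distrib, sub_nonneg]
    exact sum_mul_le_sum_mul_of_support_minimal (hy.1 i) (by rw [hW.1.2 i, hy.2 i]) (hW.2 i)
  show Ψ x ≤ Ψ y
  linarith [hconv.add_fderiv_sub_le hW.1 hy hΨ]

theorem isWardrop_iff_isMinOn (hpot : IsPotentialOn d Ψ c)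
    (hconv : ConvexOn ℝ {x | Feasible d x} Ψ) (hΨ : DifferentiableAt ℝ Ψ x) :
    IsWardrop d c x ↔ Feasible d x ∧ IsMinOn Ψ {x | Feasible d x} x :=
  ⟨fun hW => ⟨hW.1, hW.isMinOn hpot hconv hΨ⟩, fun h => isWardrop_of_isMinOn hpot h.1 h.2 hΨ⟩

end Wardrop

section Penalty

variable {E : Type*} [TopologicalSpace E] {K : Set E} {f h : E → ℝ}

def respectingPrices (K : Set E) (f h : E → ℝ) (B : ℝ) : Set ℝ :=
  {lam | ∃ x ∈ K, IsMinOn (fun y => f y + lam * h y) K x ∧ h x ≤ B}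

lemma le_of_isMinOn_add_mul {a b : ℝ} {x y : E} (hab : a < b)
    (hx : IsMinOn (fun z => f z + a * h z) K x) (hy : IsMinOn (fun z => f z + b * h z) K y)
    (hxK : x ∈ K) (hyK : y ∈ K) : h y ≤ h x := by
  have hxy : f x + a * h x ≤ f y + a * h y := hx hyK
  have hyx : f y + b * h y ≤ f x + b * h x := hy hxK
  nlinarith

lemma isUpperSet_respectingPrices (hK : IsCompact K) (hf : ContinuousOn f K)
    (hh : ContinuousOn h K) (B : ℝ) : IsUpperSet (respectingPrices K f h B) := by
  rintro a b hab ⟨x, hxK, hx, hxB⟩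
  rcases hab.eq_or_lt with rfl | hlt
  · exact ⟨x, hxK, hx, hxB⟩
  obtain ⟨y, hyK, hy⟩ := hK.exists_isMinOn ⟨x, hxK⟩ (hf.add (continuousOn_const.mul hh))
  exact ⟨y, hyK, hy, (le_of_isMinOn_add_mul hlt hx hy hxK hyK).trans hxB⟩

lemma isClosed_respectingPrices (hK : IsCompact K) (hf : ContinuousOn f K)
    (hh : ContinuousOn h K) (B : ℝ) : IsClosed (respectingPrices K f h B) := by
  have : CompactSpace K := isCompact_iff_compactSpace.1 hK
  have hf' : Continuous fun x : K => f x := hf.domRestrict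
  have hh' : Continuous fun x : K => h x := hh.domRestrict
  have hT : IsClosed {q : ℝ × K |
      (∀ y : K, f q.2 + q.1 * h q.2 ≤ f y + q.1 * h y) ∧ h q.2 ≤ B} := by
    simp only [Set.ofPred_and, Set.ofPred_forall]
    exact (isClosed_iInter fun y => isClosed_le
        ((hf'.comp continuous_snd).add (continuous_fst.mul (hh'.comp continuous_snd)))
        (continuous_const.add (continuous_fst.mul continuous_const))).inter
      (isClosed_le (hh'.comp continuous_snd) continuous_const)
  convert isClosedMap_fst_of_compactSpace _ hT
  ext lam
  simp [respectingPrices, isMinOn_iff, and_left_comm]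

end Penalty

lemma setOf_exists_isWardrop_eq_respectingPrices {d : I → ℝ} {Φ : (∀ i, P i → ℝ) → ℝ}
    {τ : (∀ i, P i → ℝ) → ∀ i, P i → ℝ} (hpot : IsPotentialOn d Φ τ) (hdiff : Differentiable ℝ Φ)
    (hconv : ConvexOn ℝ {x | Feasible d x} Φ) (g : ∀ i, P i → ℝ) (B : ℝ) :
    {lam : ℝ | 0 ≤ lam ∧
      ∃ x, IsWardrop d (fun y i p => τ y i p + lam * g i p) x ∧ Gtot g x ≤ B} =
      Set.Ici 0 ∩ respectingPrices {x | Feasible d x} Φ (Gtot g) B := by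
  refine Set.ext fun lam => and_congr_right fun _ => exists_congr fun x => ?_
  rw [isWardrop_iff_isMinOn (hpot.add_mul_Gtot hdiff g lam)
    (hconv.add (convexOn_const_mul_Gtot (convex_feasible d) g lam))
    ((hdiff.add ((differentiable_Gtot g).const_mul lam)) x), and_assoc]
  rfl

lemma exists_nonneg_forall_le_mul {ι : Type*} [Finite ι] (a b : ι → ℝ) :
    ∃ lam, 0 ≤ lam ∧ ∀ k, 0 < b k → a k ≤ lam * b k := by
  obtain ⟨M, hM⟩ := (Set.finite_range fun k => a k / b k).bddAbove
  exact ⟨max M 0, le_max_right _ _, fun k hk =>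
    (div_le_iff₀ hk).1 ((hM ⟨k, rfl⟩).trans (le_max_left _ _))⟩

lemma exists_price_isWardrop_of_isMinOn_argmin {d : I → ℝ} {Φ : (∀ i, P i → ℝ) → ℝ}
    {τ : (∀ i, P i → ℝ) → ∀ i, P i → ℝ} {g x : ∀ i, P i → ℝ} (hpot : IsPotentialOn d Φ τ)
    (hΦ : DifferentiableAt ℝ Φ x) (hx : Feasible d x)
    (hxG : IsMinOn (Gtot g) {y | Feasible d y} x)
    (hxΦ : IsMinOn Φ {y | Feasible d y ∧ Gtot g y ≤ Gtot g x} x) :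
    ∃ lam, 0 ≤ lam ∧ IsWardrop d (fun y i p => τ y i p + lam * g i p) x := by
  have hg : ∀ i p, 0 < x i p → ∀ q, g i p ≤ g i q := fun i p hp q =>
    cost_le_of_isMinOn (isPotentialOn_Gtot d g) hxG (convex_feasible d) hx hx
      (differentiable_Gtot g x) hp (hx.add_smul_unitFlow_sub i p q)
  have hτ : ∀ i p, 0 < x i p → ∀ q, g i q ≤ g i p → τ x i p ≤ τ x i q := by
    intro i p hp q hqp
    have hconv : Convex ℝ {y | Feasible d y ∧ Gtot g y ≤ Gtot g x} :=
      (convex_feasible (P := P) d).inter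
        (convex_halfSpace_le (f := Gtot g) (by simpa using (gtotCLM g).toLinearMap.isLinear) _)
    refine cost_le_of_isMinOn hpot hxΦ hconv ⟨hx, le_rfl⟩ hx hΦ hp
      ⟨hx.add_smul_unitFlow_sub i p q, ?_⟩
    rw [← coe_gtotCLM, map_add, map_smul, map_sub, coe_gtotCLM, Gtot_unitFlow, Gtot_unitFlow,
      smul_eq_mul]
    nlinarith
  obtain ⟨lam, hlam, hbound⟩ := exists_nonneg_forall_le_mul
    (fun k : Σ i, P i × P i => τ x k.1 k.2.1 - τ x k.1 k.2.2)
    (fun k => g k.1 k.2.2 - g k.1 k.2.1)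
  refine ⟨lam, hlam, hx, fun i p hp q => ?_⟩
  rcases (hg i p hp q).eq_or_lt with hpq | hpq
  · have := hτ i p hp q hpq.ge
    simp only [hpq]
    linarith
  · have := hbound ⟨i, p, q⟩ (sub_pos.2 hpq)
    dsimp only at this ⊢
    linarith

lemma exists_isWardrop_isMinOn_Gtot {d : I → ℝ} {Φ : (∀ i, P i → ℝ) → ℝ}
    {τ : (∀ i, P i → ℝ) → ∀ i, P i → ℝ} (hpot : IsPotentialOn d Φ τ) (hΦ : Differentiable ℝ Φ)
    (g : ∀ i, P i → ℝ) (hF : ∃ x : ∀ i, P i → ℝ, Feasible d x) :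
    ∃ lam, 0 ≤ lam ∧ ∃ x, IsWardrop d (fun y i p => τ y i p + lam * g i p) x ∧
      IsMinOn (Gtot g) {y | Feasible d y} x := by
  obtain ⟨x₀, hx₀, hx₀min⟩ :=
    (isCompact_feasible d).exists_isMinOn hF (continuous_Gtot g).continuousOn
  have hS : IsCompact {y | Feasible d y ∧ Gtot g y ≤ Gtot g x₀} :=
    (isCompact_feasible d).inter_right (isClosed_le (continuous_Gtot g) continuous_const)
  obtain ⟨x, hxS, hxmin⟩ := hS.exists_isMinOn ⟨x₀, hx₀, le_rfl⟩ hΦ.continuous.continuousOn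
  have hGx : Gtot g x = Gtot g x₀ := le_antisymm hxS.2 (hx₀min hxS.1)
  have hxG : IsMinOn (Gtot g) {y | Feasible d y} x := fun y hy => hGx ▸ hx₀min hy
  rw [← hGx] at hxmin
  obtain ⟨lam, hlam, hW⟩ := exists_price_isWardrop_of_isMinOn_argmin hpot (hΦ x) hxS.1 hxG hxmin
  exact ⟨lam, hlam, x, hW, hxG⟩

theorem price_set_respecting_budget_nonempty_upclosed_closed_general
    (d : I → ℝ)
    (τ : (∀ i, P i → ℝ) → ∀ i, P i → ℝ)
    (Φ : (∀ i, P i → ℝ) → ℝ)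
    (hΦdiff : Differentiable ℝ Φ) (hΦconv : ConvexOn ℝ Set.univ Φ)
    (hΦgrad : ∀ x, Feasible d x →
      ∀ i p, fderiv ℝ Φ x (Pi.single i (Pi.single p (1 : ℝ))) = τ x i p)
    (g : ∀ i, P i → ℝ)
    (B : ℝ)
    (hBfeas : ∃ x, Feasible d x ∧ Gtot g x ≤ B) :
    Set.Nonempty {lam : ℝ | 0 ≤ lam ∧
        ∃ x, IsWardrop d (fun y i p => τ y i p + lam * g i p) x ∧ Gtot g x ≤ B} ∧
    (∀ lam ∈ {lam : ℝ | 0 ≤ lam ∧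
        ∃ x, IsWardrop d (fun y i p => τ y i p + lam * g i p) x ∧ Gtot g x ≤ B},
      ∀ lam' : ℝ, lam ≤ lam' →
        lam' ∈ {lam : ℝ | 0 ≤ lam ∧
          ∃ x, IsWardrop d (fun y i p => τ y i p + lam * g i p) x ∧ Gtot g x ≤ B}) ∧
    IsClosed {lam : ℝ | 0 ≤ lam ∧
        ∃ x, IsWardrop d (fun y i p => τ y i p + lam * g i p) x ∧ Gtot g x ≤ B} ∧
    ∃ lamStar : ℝ, IsLeast {lam : ℝ | 0 ≤ lam ∧
        ∃ x, IsWardrop d (fun y i p => τ y i p + lam * g i p) x ∧ Gtot g x ≤ B} lamStar := by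
  set L := {lam : ℝ | 0 ≤ lam ∧
    ∃ x, IsWardrop d (fun y i p => τ y i p + lam * g i p) x ∧ Gtot g x ≤ B}
  obtain ⟨xb, hxb, hxbB⟩ := hBfeas
  obtain ⟨lam, hlam, x, hW, hxG⟩ := exists_isWardrop_isMinOn_Gtot hΦgrad hΦdiff g ⟨xb, hxb⟩
  have hne : L.Nonempty := ⟨lam, hlam, x, hW, (hxG hxb).trans hxbB⟩
  have hL : L = Set.Ici 0 ∩ respectingPrices {x | Feasible d x} Φ (Gtot g) B :=
    setOf_exists_isWardrop_eq_respectingPrices hΦgrad hΦdiff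
      (hΦconv.subset (Set.subset_univ _) (convex_feasible d)) g B
  have hK := isCompact_feasible (P := P) d
  have hΦcont := hΦdiff.continuous.continuousOn (s := {x | Feasible d x})
  have hGcont := (continuous_Gtot g).continuousOn (s := {x | Feasible d x})
  have hclosed : IsClosed L :=
    hL ▸ isClosed_Ici.inter (isClosed_respectingPrices hK hΦcont hGcont B)
  have hupper : IsUpperSet L :=
    hL ▸ (isUpperSet_Ici 0).inter (isUpperSet_respectingPrices hK hΦcont hGcont B)
  exact ⟨hne, fun a ha b hab => hupper hab ha, hclosed, _,
    hclosed.isLeast_csInf hne ⟨0, fun _ h => h.1⟩⟩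

/-- for a single externality class, continuous travel times with a
differentiable convex potential, constant externality factors and a feasible budget `B`,
the set `L(B) = {λ ≥ 0 : ∃ x ∈ WE(λ), G(x) ≤ B}` is nonempty, upward closed, and closed;
in particular it has a least element `λ*`. -/
theorem price_set_respecting_budget_nonempty_upclosed_closed
    [∀ i, Nonempty (P i)]
    (d : I → ℝ) (hd : ∀ i, 0 < d i)
    (τ : (∀ i, P i → ℝ) → ∀ i, P i → ℝ)
    (hτ : ∀ i p, ContinuousOn (fun x => τ x i p) {x | Feasible d x})
    (Φ : (∀ i, P i → ℝ) → ℝ)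
    (hΦdiff : Differentiable ℝ Φ) (hΦconv : ConvexOn ℝ Set.univ Φ)
    (hΦgrad : ∀ x, Feasible d x →
      ∀ i p, fderiv ℝ Φ x (Pi.single i (Pi.single p (1 : ℝ))) = τ x i p)
    (g : ∀ i, P i → ℝ) (hg : ∀ i p, 0 ≤ g i p)
    (B : ℝ) (hB : 0 ≤ B)
    (hBfeas : ∃ x, Feasible d x ∧ Gtot g x ≤ B) :
    Set.Nonempty {lam : ℝ | 0 ≤ lam ∧
        ∃ x, IsWardrop d (fun y i p => τ y i p + lam * g i p) x ∧ Gtot g x ≤ B} ∧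
    (∀ lam ∈ {lam : ℝ | 0 ≤ lam ∧
        ∃ x, IsWardrop d (fun y i p => τ y i p + lam * g i p) x ∧ Gtot g x ≤ B},
      ∀ lam' : ℝ, lam ≤ lam' →
        lam' ∈ {lam : ℝ | 0 ≤ lam ∧
          ∃ x, IsWardrop d (fun y i p => τ y i p + lam * g i p) x ∧ Gtot g x ≤ B}) ∧
    IsClosed {lam : ℝ | 0 ≤ lam ∧
        ∃ x, IsWardrop d (fun y i p => τ y i p + lam * g i p) x ∧ Gtot g x ≤ B} ∧
    ∃ lamStar : ℝ, IsLeast {lam : ℝ | 0 ≤ lam ∧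
        ∃ x, IsWardrop d (fun y i p => τ y i p + lam * g i p) x ∧ Gtot g x ≤ B} lamStar :=
  price_set_respecting_budget_nonempty_upclosed_closed_general d τ Φ hΦdiff hΦconv hΦgrad g B hBfeas
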